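/- Let E be a Jordan Banach triple with Cohen's factorisation property: for every norm-null sequence (aₙ) in E there exist a norm-null sequence (bₙ) and elements x, y ∈ E with aₙ = {x, bₙ, y} for all n. Let T : E → F be a linear map into a Jordan Banach triple F such that for each a ∈ E the map x ↦ T({a,x,a}) is continuous. Then T is continuous. -/

import Mathlib

open Filter Topology

/-- A (real) Jordan Banach triple: a Banach space with a continuous triple
product, (real-)linear in each variable, symmetric in the outer variables and
satisfying the Jordan identity. -/
structure JordanBanachTriple (E : Type*) [NormedAddCommGroup E] [NormedSpace ℝ E] where
  tp : E → E → E → E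
  add_left : ∀ a a' b c, tp (a + a') b c = tp a b c + tp a' b c
  smul_left : ∀ (r : ℝ) a b c, tp (r • a) b c = r • tp a b c
  add_mid : ∀ a b b' c, tp a (b + b') c = tp a b c + tp a b' c
  smul_mid : ∀ (r : ℝ) a b c, tp a (r • b) c = r • tp a b c
  symm : ∀ a b c, tp a b c = tp c b a
  jordan : ∀ a b x y z,
    tp a b (tp x y z) = tp (tp a b x) y z - tp x (tp b a y) z + tp x y (tp a b z)
  bound : ∃ C > 0, ∀ a b c, ‖tp a b c‖ ≤ C * ‖a‖ * ‖b‖ * ‖c‖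

def sepSpace {X Y : Type*} [NormedAddCommGroup X] [NormedAddCommGroup Y]
    (T : X → Y) : Set Y :=
  {z | ∃ x : ℕ → X, Tendsto x atTop (𝓝 0) ∧ Tendsto (fun n => T (x n)) atTop (𝓝 z)}

/-!
Polarising `T {a, x, a}` in `a` shows that `x ↦ T {p, x, q}` is continuous for all `p, q`.
A null sequence factors as `aₙ = {p, bₙ, q}` with `bₙ → 0`, so `T aₙ → T {p, 0, q} = 0`:
`T` is sequentially continuous at `0`, hence continuous.
-/

namespace JordanBanachTriple

variable {E : Type*} [NormedAddCommGroup E] [NormedSpace ℝ E] (J : JordanBanachTriple E)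

theorem tp_zero_mid (a c : E) : J.tp a 0 c = 0 := by
  simpa using J.smul_mid 0 a 0 c

theorem two_smul_tp (x b y : E) :
    (2 : ℝ) • J.tp x b y = J.tp (x + y) b (x + y) - J.tp x b x - J.tp y b y := by
  have expand : J.tp (x + y) b (x + y) = J.tp x b x + J.tp x b y + J.tp x b y + J.tp y b y := by
    rw [J.add_left, J.symm x b (x + y), J.symm y b (x + y), J.add_left, J.add_left,
      J.symm y b x, J.symm x b x]
    abel
  rw [expand, two_smul]
  abel

theorem continuous_comp_tp_of_continuous_comp_tp_self {F : Type*} [AddCommGroup F] [Module ℝ F]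
    [TopologicalSpace F] [IsTopologicalAddGroup F] [ContinuousConstSMul ℝ F] (T : E →ₗ[ℝ] F)
    (h : ∀ a, Continuous fun b => T (J.tp a b a)) (x y : E) :
    Continuous fun b => T (J.tp x b y) := by
  have two_smul_cont : Continuous fun b => T ((2 : ℝ) • J.tp x b y) := by
    simp only [two_smul_tp, map_sub]
    exact ((h _).sub (h x)).sub (h y)
  convert two_smul_cont.const_smul (2 : ℝ)⁻¹ using 1
  ext b
  simp [smul_smul]

end JordanBanachTriple

theorem stmt13_general {E F : Type*}
    [NormedAddCommGroup E] [NormedSpace ℝ E]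
    [NormedAddCommGroup F] [NormedSpace ℝ F]
    (JE : JordanBanachTriple E)
    (hCFP : ∀ a : ℕ → E, Tendsto a atTop (𝓝 0) →
      ∃ (b : ℕ → E) (x y : E), Tendsto b atTop (𝓝 0) ∧ ∀ n, a n = JE.tp x (b n) y)
    (T : E →ₗ[ℝ] F)
    (h : ∀ a : E, Continuous fun x => T (JE.tp a x a)) :
    Continuous T := by
  refine continuous_iff_seqContinuous.2 fun {u x} hu => ?_
  obtain ⟨b, p, q, hb, hfac⟩ := hCFP (fun n => u n - x) (by simpa using hu.sub_const x)
  have hT : Tendsto (fun n => T (u n - x)) atTop (𝓝 0) := by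
    have := ((JE.continuous_comp_tp_of_continuous_comp_tp_self T h p q).tendsto 0).comp hb
    simpa [hfac, JE.tp_zero_mid, Function.comp_def] using this
  simpa [Function.comp_def] using hT.add_const (T x)

/-- If `E` has Cohen's factorisation property and `x ↦ T {a,x,a}` is continuous
for every `a`, then `T` is continuous. -/
theorem stmt13 {E F : Type*}
    [NormedAddCommGroup E] [NormedSpace ℝ E] [CompleteSpace E]
    [NormedAddCommGroup F] [NormedSpace ℝ F] [CompleteSpace F]
    (JE : JordanBanachTriple E) (JF : JordanBanachTriple F)
    (hCFP : ∀ a : ℕ → E, Tendsto a atTop (𝓝 0) →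
      ∃ (b : ℕ → E) (x y : E), Tendsto b atTop (𝓝 0) ∧ ∀ n, a n = JE.tp x (b n) y)
    (T : E →ₗ[ℝ] F)
    (h : ∀ a : E, Continuous fun x => T (JE.tp a x a)) :
    Continuous T :=
  stmt13_general JE hCFP T h
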